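/- (Error estimate of Theorem 1, estimate (46).) Let F be the corruption–poverty model vector field and let y : [t₀, T] → ℝ⁵ be differentiable with y'(t) = F(y(t)) on [t₀, T]. For a positive integer M set k = (T − t₀)/M and t_n = t₀ + n·k; define the numerical solution by Y⁰ = y(t₀) and Y^{n+1} = H_{k/3}(H_{k/3}(H_{k/3}(Y^n))) for n = 0, …, M − 1, where H_h(z) = z + (h/2)·(F(z) + F(z + h·F(z))). Then there exist constants C̃₁ > 0 and C̃₂ > 0, independent of k, such that for every positive integer M, (k·Σ_{n=1}^{M} ‖y(t_n) − Y^n‖_∞²)^{1/2} ≤ C̃₂·(e^{(T − t₀)·C̃₁} − 1)·k²; in particular the scheme is second-order convergent. -/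

import Mathlib

open Metric Set

set_option maxHeartbeats 6000000

/-! ### Auxiliary general lemmas -/

lemma aux_bound_on_ball {E F' : Type*} [NormedAddCommGroup E] [NormedSpace ℝ E]
    [FiniteDimensional ℝ E] [NormedAddCommGroup F'] (f : E → F') (hf : Continuous f) (r : ℝ) :
    ∃ B ≥ 0, ∀ x ∈ closedBall (0 : E) r, ‖f x‖ ≤ B := by
  obtain ⟨B, hB⟩ := (isCompact_closedBall (0 : E) r).exists_bound_of_continuousOn
    hf.continuousOn
  exact ⟨max B 0, le_max_right _ _, fun x hx => (hB x hx).trans (le_max_left _ _)⟩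

lemma aux_lip_on_ball {E F' : Type*} [NormedAddCommGroup E] [NormedSpace ℝ E]
    [FiniteDimensional ℝ E] [NormedAddCommGroup F'] [NormedSpace ℝ F'] (f : E → F')
    (hf : ContDiff ℝ (⊤ : ℕ∞) f) (r : ℝ) :
    ∃ L ≥ 0, ∀ x ∈ closedBall (0 : E) r, ∀ z ∈ closedBall (0 : E) r,
      ‖f x - f z‖ ≤ L * ‖x - z‖ := by
  obtain ⟨C, hC0, hC⟩ := aux_bound_on_ball (fderiv ℝ f) (hf.continuous_fderiv (by simp)) r
  refine ⟨C, hC0, fun x hx z hz => ?_⟩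
  exact (convex_closedBall _ _).norm_image_sub_le_of_norm_fderiv_le
    (fun w _ => (hf.differentiable (by simp)).differentiableAt) (fun w hw => hC w hw) hz hx

lemma aux_quad_bound {E : Type*} [NormedAddCommGroup E] [NormedSpace ℝ E]
    {F' : Type*} [NormedAddCommGroup F'] [NormedSpace ℝ F']
    (f : E → F') (hf : ContDiff ℝ (⊤ : ℕ∞) f) (r L₂ : ℝ) (hL₂ : 0 ≤ L₂)
    (hL : ∀ a ∈ closedBall (0 : E) r, ∀ b ∈ closedBall (0 : E) r,
      ‖fderiv ℝ f a - fderiv ℝ f b‖ ≤ L₂ * ‖a - b‖)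
    (z w : E) (hz : z ∈ closedBall (0 : E) r) (hzw : z + w ∈ closedBall (0 : E) r) :
    ‖f (z + w) - f z - fderiv ℝ f z w‖ ≤ L₂ * ‖w‖ ^ 2 := by
  have hdiff : Differentiable ℝ f := hf.differentiable (by simp)
  set χ : ℝ → F' := fun u => f (z + u • w) - u • (fderiv ℝ f z w) with hχ
  have hmem : ∀ u ∈ Icc (0 : ℝ) 1, z + u • w ∈ closedBall (0 : E) r := by
    intro u hu
    have := (convex_closedBall (0 : E) r).add_smul_sub_mem hz hzw hu
    simpa using this
  have hder : ∀ u ∈ Icc (0 : ℝ) 1, HasDerivWithinAt χ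
      (fderiv ℝ f (z + u • w) w - fderiv ℝ f z w) (Icc (0 : ℝ) 1) u := by
    intro u hu
    have h1 : HasDerivAt (fun u : ℝ => z + u • w) w u := by
      simpa using ((hasDerivAt_id u).smul_const w).const_add z
    have h2 : HasDerivAt (fun u : ℝ => f (z + u • w)) (fderiv ℝ f (z + u • w) w) u :=
      (hdiff (z + u • w)).hasFDerivAt.comp_hasDerivAt u h1
    have h3 : HasDerivAt (fun u : ℝ => u • (fderiv ℝ f z w)) (fderiv ℝ f z w) u := by
      simpa using (hasDerivAt_id u).smul_const (fderiv ℝ f z w)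
    exact (h2.sub h3).hasDerivWithinAt
  have hbound : ∀ u ∈ Ico (0 : ℝ) 1, ‖fderiv ℝ f (z + u • w) w - fderiv ℝ f z w‖
      ≤ L₂ * ‖w‖ ^ 2 := by
    intro u hu
    have hu' : u ∈ Icc (0 : ℝ) 1 := Ico_subset_Icc_self hu
    have h1 : ‖fderiv ℝ f (z + u • w) w - fderiv ℝ f z w‖
        ≤ ‖fderiv ℝ f (z + u • w) - fderiv ℝ f z‖ * ‖w‖ := by
      have := (fderiv ℝ f (z + u • w) - fderiv ℝ f z).le_opNorm w
      simpa using this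
    have h2 : ‖fderiv ℝ f (z + u • w) - fderiv ℝ f z‖ ≤ L₂ * ‖u • w‖ := by
      have := hL _ (hmem u hu') _ hz
      simpa using this
    have h3 : ‖u • w‖ ≤ ‖w‖ := by
      rw [norm_smul]
      have : |u| ≤ 1 := by
        rw [abs_le]; exact ⟨by linarith [hu.1], le_of_lt hu.2⟩
      calc ‖u‖ * ‖w‖ ≤ 1 * ‖w‖ := by
            apply mul_le_mul_of_nonneg_right _ (norm_nonneg w)
            simpa [Real.norm_eq_abs] using this
        _ = ‖w‖ := one_mul _
    calc ‖fderiv ℝ f (z + u • w) w - fderiv ℝ f z w‖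
        ≤ (L₂ * ‖u • w‖) * ‖w‖ := h1.trans (mul_le_mul_of_nonneg_right h2 (norm_nonneg w))
      _ ≤ L₂ * ‖w‖ ^ 2 := by
          rw [pow_two]
          calc L₂ * ‖u • w‖ * ‖w‖ ≤ L₂ * ‖w‖ * ‖w‖ := by
                apply mul_le_mul_of_nonneg_right _ (norm_nonneg w)
                exact mul_le_mul_of_nonneg_left h3 hL₂
            _ = L₂ * (‖w‖ * ‖w‖) := by ring
  have := norm_image_sub_le_of_norm_deriv_le_segment' hder hbound 1 (right_mem_Icc.2 zero_le_one)
  have hval : χ 1 - χ 0 = f (z + w) - f z - fderiv ℝ f z w := by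
    simp [hχ]
    abel
  rw [hval] at this
  simpa using this

/-- The corruption–poverty model vector field `F : ℝ⁵ → ℝ⁵`. -/
noncomputable def corruptionField (θ γ ρ μ α₁ α₂ r₁ r₂ τ b₁ b₂ σ N : ℝ)
    (y : Fin 5 → ℝ) : Fin 5 → ℝ :=
  ![θ - (α₁ * y 0 * y 1 + α₂ * y 0 * y 2) / N - (γ + σ) * y 0,
    (α₁ * y 0 * y 1 + r₂ * y 1 * y 2) / N - (γ + b₁ + τ + r₁) * y 1 + ρ * (1 - μ) * y 3,
    (α₂ * y 0 * y 2 - r₂ * y 1 * y 2) / N + r₁ * y 1 - (γ + b₂) * y 2,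
    τ * y 1 - (ρ * (1 - μ) + ρ * μ + γ) * y 3,
    σ * y 0 + b₁ * y 1 + b₂ * y 2 + ρ * μ * y 3 - γ * y 4]

/-- The Heun substep map `H_h(z) = z + (h/2)(F(z) + F(z + h F(z)))`. -/
noncomputable def heunStep (F : (Fin 5 → ℝ) → Fin 5 → ℝ) (h : ℝ)
    (z : Fin 5 → ℝ) : Fin 5 → ℝ :=
  z + (h / 2) • (F z + F (z + h • F z))

lemma corruptionField_contDiff (θ γ ρ μ α₁ α₂ r₁ r₂ τ b₁ b₂ σ N : ℝ) :
    ContDiff ℝ (⊤ : ℕ∞) (corruptionField θ γ ρ μ α₁ α₂ r₁ r₂ τ b₁ b₂ σ N) := by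
  rw [contDiff_pi]
  intro i
  fin_cases i
  · show ContDiff ℝ (⊤ : ℕ∞) fun y : Fin 5 → ℝ =>
      θ - (α₁ * y 0 * y 1 + α₂ * y 0 * y 2) * N⁻¹ - (γ + σ) * y 0
    fun_prop
  · show ContDiff ℝ (⊤ : ℕ∞) fun y : Fin 5 → ℝ =>
      (α₁ * y 0 * y 1 + r₂ * y 1 * y 2) * N⁻¹ - (γ + b₁ + τ + r₁) * y 1 + ρ * (1 - μ) * y 3
    fun_prop
  · show ContDiff ℝ (⊤ : ℕ∞) fun y : Fin 5 → ℝ =>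
      (α₂ * y 0 * y 2 - r₂ * y 1 * y 2) * N⁻¹ + r₁ * y 1 - (γ + b₂) * y 2
    fun_prop
  · show ContDiff ℝ (⊤ : ℕ∞) fun y : Fin 5 → ℝ =>
      τ * y 1 - (ρ * (1 - μ) + ρ * μ + γ) * y 3
    fun_prop
  · show ContDiff ℝ (⊤ : ℕ∞) fun y : Fin 5 → ℝ =>
      σ * y 0 + b₁ * y 1 + b₂ * y 2 + ρ * μ * y 3 - γ * y 4
    fun_prop

/-! ### Properties of a single Heun substep -/

lemma heun_move (F : (Fin 5 → ℝ) → Fin 5 → ℝ) (R B h : ℝ)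
    (hB : ∀ x ∈ closedBall (0 : Fin 5 → ℝ) (R + 4), ‖F x‖ ≤ B)
    (hh : 0 ≤ h) (hhB : h * B ≤ 1) (z : Fin 5 → ℝ) (hz : ‖z‖ ≤ R + 3) :
    ‖heunStep F h z - z‖ ≤ h * B := by
  have hzS : z ∈ closedBall (0 : Fin 5 → ℝ) (R + 4) :=
    mem_closedBall_zero_iff.2 (by linarith)
  have hstage : z + h • F z ∈ closedBall (0 : Fin 5 → ℝ) (R + 4) := by
    rw [mem_closedBall_zero_iff]
    calc ‖z + h • F z‖ ≤ ‖z‖ + ‖h • F z‖ := norm_add_le _ _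
      _ ≤ (R + 3) + h * B := by
          rw [norm_smul, Real.norm_eq_abs, abs_of_nonneg hh]
          exact add_le_add hz (mul_le_mul_of_nonneg_left (hB z hzS) hh)
      _ ≤ R + 4 := by linarith
  have : heunStep F h z - z = (h / 2) • (F z + F (z + h • F z)) := by
    simp [heunStep]
  rw [this, norm_smul, Real.norm_eq_abs, abs_of_nonneg (by linarith : (0:ℝ) ≤ h / 2)]
  calc h / 2 * ‖F z + F (z + h • F z)‖ ≤ h / 2 * (B + B) := by
        apply mul_le_mul_of_nonneg_left _ (by linarith : (0:ℝ) ≤ h / 2)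
        exact (norm_add_le _ _).trans (add_le_add (hB z hzS) (hB _ hstage))
    _ = h * B := by ring

lemma heun_lip (F : (Fin 5 → ℝ) → Fin 5 → ℝ) (R B L h : ℝ)
    (hL0 : 0 ≤ L)
    (hB : ∀ x ∈ closedBall (0 : Fin 5 → ℝ) (R + 4), ‖F x‖ ≤ B)
    (hL : ∀ a ∈ closedBall (0 : Fin 5 → ℝ) (R + 4), ∀ b ∈ closedBall (0 : Fin 5 → ℝ) (R + 4),
      ‖F a - F b‖ ≤ L * ‖a - b‖)
    (hh : 0 ≤ h) (hhB : h * B ≤ 1) (hhL : h * L ≤ 1)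
    (z z' : Fin 5 → ℝ) (hz : ‖z‖ ≤ R + 3) (hz' : ‖z'‖ ≤ R + 3) :
    ‖heunStep F h z - heunStep F h z'‖ ≤ (1 + 2 * h * L) * ‖z - z'‖ := by
  have mem : ∀ w : Fin 5 → ℝ, ‖w‖ ≤ R + 3 → w ∈ closedBall (0 : Fin 5 → ℝ) (R + 4) :=
    fun w hw => mem_closedBall_zero_iff.2 (by linarith)
  have hstagemem : ∀ w : Fin 5 → ℝ, ‖w‖ ≤ R + 3 →
      w + h • F w ∈ closedBall (0 : Fin 5 → ℝ) (R + 4) := by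
    intro w hw
    rw [mem_closedBall_zero_iff]
    calc ‖w + h • F w‖ ≤ ‖w‖ + ‖h • F w‖ := norm_add_le _ _
      _ ≤ (R + 3) + h * B := by
          rw [norm_smul, Real.norm_eq_abs, abs_of_nonneg hh]
          exact add_le_add hw (mul_le_mul_of_nonneg_left (hB w (mem w hw)) hh)
      _ ≤ R + 4 := by linarith
  have hFz : ‖F z - F z'‖ ≤ L * ‖z - z'‖ := hL z (mem z hz) z' (mem z' hz')
  have hstage : ‖(z + h • F z) - (z' + h • F z')‖ ≤ (1 + h * L) * ‖z - z'‖ := by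
    have : (z + h • F z) - (z' + h • F z') = (z - z') + h • (F z - F z') := by
      module
    rw [this]
    calc ‖(z - z') + h • (F z - F z')‖ ≤ ‖z - z'‖ + ‖h • (F z - F z')‖ := norm_add_le _ _
      _ ≤ ‖z - z'‖ + h * (L * ‖z - z'‖) := by
          rw [norm_smul, Real.norm_eq_abs, abs_of_nonneg hh]
          exact add_le_add le_rfl (mul_le_mul_of_nonneg_left hFz hh)
      _ = (1 + h * L) * ‖z - z'‖ := by ring
  have hFs : ‖F (z + h • F z) - F (z' + h • F z')‖ ≤ L * ((1 + h * L) * ‖z - z'‖) :=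
    (hL _ (hstagemem z hz) _ (hstagemem z' hz')).trans
      (mul_le_mul_of_nonneg_left hstage hL0)
  have hid : heunStep F h z - heunStep F h z' =
      (z - z') + (h / 2) • ((F z - F z') + (F (z + h • F z) - F (z' + h • F z'))) := by
    simp only [heunStep]; module
  rw [hid]
  have h2 : (0:ℝ) ≤ h / 2 := by linarith
  calc ‖(z - z') + (h / 2) • ((F z - F z') + (F (z + h • F z) - F (z' + h • F z')))‖
      ≤ ‖z - z'‖ + (h / 2) * (L * ‖z - z'‖ + L * ((1 + h * L) * ‖z - z'‖)) := by
        refine (norm_add_le _ _).trans (add_le_add le_rfl ?_)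
        rw [norm_smul, Real.norm_eq_abs, abs_of_nonneg h2]
        exact mul_le_mul_of_nonneg_left ((norm_add_le _ _).trans (add_le_add hFz hFs)) h2
    _ = (1 + h * L + h * L * (h * L) / 2) * ‖z - z'‖ := by ring
    _ ≤ (1 + 2 * h * L) * ‖z - z'‖ := by
        apply mul_le_mul_of_nonneg_right _ (norm_nonneg _)
        have h1 : 0 ≤ h * L := mul_nonneg hh hL0
        nlinarith

/-! ### Local truncation error of a single Heun substep -/

lemma heun_consistency (F : (Fin 5 → ℝ) → Fin 5 → ℝ) (hF : ContDiff ℝ (⊤ : ℕ∞) F)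
    (y : ℝ → Fin 5 → ℝ) (t₀ T : ℝ)
    (hy : ∀ t ∈ Icc t₀ T, HasDerivAt y (F (y t)) t)
    (R B L₂ LG : ℝ) (hB0 : 0 ≤ B) (hL₂0 : 0 ≤ L₂) (hLG0 : 0 ≤ LG)
    (hyR : ∀ t ∈ Icc t₀ T, ‖y t‖ ≤ R)
    (hB : ∀ x ∈ closedBall (0 : Fin 5 → ℝ) (R + 4), ‖F x‖ ≤ B)
    (hL₂ : ∀ a ∈ closedBall (0 : Fin 5 → ℝ) (R + 4), ∀ b ∈ closedBall (0 : Fin 5 → ℝ) (R + 4),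
      ‖fderiv ℝ F a - fderiv ℝ F b‖ ≤ L₂ * ‖a - b‖)
    (hLG : ∀ a ∈ closedBall (0 : Fin 5 → ℝ) (R + 4), ∀ b ∈ closedBall (0 : Fin 5 → ℝ) (R + 4),
      ‖fderiv ℝ F a (F a) - fderiv ℝ F b (F b)‖ ≤ LG * ‖a - b‖)
    (t h : ℝ) (hh : 0 < h) (hhB : h * B ≤ 1) (ht : t₀ ≤ t) (hth : t + h ≤ T) :
    ‖y (t + h) - heunStep F h (y t)‖ ≤ (LG * B + L₂ * B * B) * h ^ 3 := by
  have hdiff : Differentiable ℝ F := hF.differentiable (by simp)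
  set G : (Fin 5 → ℝ) → Fin 5 → ℝ := fun z => fderiv ℝ F z (F z) with hGdef
  have hsub : Icc t (t + h) ⊆ Icc t₀ T := Icc_subset_Icc ht hth
  have hmem : ∀ u ∈ Icc t (t + h), y u ∈ closedBall (0 : Fin 5 → ℝ) (R + 4) := by
    intro u hu
    exact mem_closedBall_zero_iff.2 ((hyR u (hsub hu)).trans (by linarith))
  have htmem : t ∈ Icc t (t + h) := left_mem_Icc.2 (by linarith)
  have hmove : ∀ u ∈ Icc t (t + h), ‖y u - y t‖ ≤ B * (u - t) := by
    apply norm_image_sub_le_of_norm_deriv_le_segment' (f' := fun u => F (y u))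
    · exact fun u hu => (hy u (hsub hu)).hasDerivWithinAt
    · exact fun u hu => hB (y u) (hmem u (Ico_subset_Icc_self hu))
  have hgder : ∀ u ∈ Icc t (t + h), HasDerivAt (fun s => F (y s)) (G (y u)) u :=
    fun u hu => (hdiff (y u)).hasFDerivAt.comp_hasDerivAt u (hy u (hsub hu))
  set φ : ℝ → Fin 5 → ℝ := fun u => F (y u) - F (y t) - (u - t) • G (y t) with hφdef
  have hφder : ∀ u ∈ Icc t (t + h),
      HasDerivWithinAt φ (G (y u) - G (y t)) (Icc t (t + h)) u := by
    intro u hu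
    have h1 : HasDerivAt (fun u : ℝ => (u - t) • G (y t)) (G (y t)) u := by
      simpa using ((hasDerivAt_id u).sub_const t).smul_const (G (y t))
    exact (((hgder u hu).sub_const (F (y t))).sub h1).hasDerivWithinAt
  have hφbound : ∀ u ∈ Ico t (t + h), ‖G (y u) - G (y t)‖ ≤ LG * B * h := by
    intro u hu
    have hu' : u ∈ Icc t (t + h) := Ico_subset_Icc_self hu
    calc ‖G (y u) - G (y t)‖ ≤ LG * ‖y u - y t‖ :=
          hLG (y u) (hmem u hu') (y t) (hmem t htmem)
      _ ≤ LG * (B * (u - t)) := mul_le_mul_of_nonneg_left (hmove u hu') hLG0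
      _ ≤ LG * (B * h) := by
          have : u - t ≤ h := by linarith [hu'.2]
          have := mul_le_mul_of_nonneg_left this hB0
          exact mul_le_mul_of_nonneg_left this hLG0
      _ = LG * B * h := by ring
  have hφ : ∀ u ∈ Icc t (t + h), ‖φ u‖ ≤ LG * B * h * h := by
    intro u hu
    have := norm_image_sub_le_of_norm_deriv_le_segment' hφder hφbound u hu
    have hφt : φ t = 0 := by simp [hφdef]
    rw [hφt, sub_zero] at this
    refine this.trans ?_
    have : u - t ≤ h := by linarith [hu.2]
    apply mul_le_mul_of_nonneg_left this
    positivity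
  set ψ : ℝ → Fin 5 → ℝ :=
    fun u => y u - y t - (u - t) • F (y t) - ((u - t) ^ 2 / 2) • G (y t) with hψdef
  have hψder : ∀ u ∈ Icc t (t + h), HasDerivWithinAt ψ (φ u) (Icc t (t + h)) u := by
    intro u hu
    have h1 : HasDerivAt (fun u : ℝ => (u - t) • F (y t)) (F (y t)) u := by
      simpa using ((hasDerivAt_id u).sub_const t).smul_const (F (y t))
    have h2 : HasDerivAt (fun u : ℝ => ((u - t) ^ 2 / 2) • G (y t)) ((u - t) • G (y t)) u := by
      have hsq : HasDerivAt (fun u : ℝ => (u - t) ^ 2 / 2) (u - t) u := by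
        have := (((hasDerivAt_id u).sub_const t).pow 2).div_const 2
        simpa using this
      simpa using hsq.smul_const (G (y t))
    exact ((((hy u (hsub hu)).sub_const (y t)).sub h1).sub h2).hasDerivWithinAt
  have hψ : ‖ψ (t + h)‖ ≤ LG * B * h * h * h := by
    have := norm_image_sub_le_of_norm_deriv_le_segment' hψder
      (fun u hu => hφ u (Ico_subset_Icc_self hu)) (t + h) (right_mem_Icc.2 (by linarith))
    have hψt : ψ t = 0 := by simp [hψdef]
    rw [hψt, sub_zero] at this
    simpa using this
  set w : Fin 5 → ℝ := h • F (y t) with hwdef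
  have hwnorm : ‖w‖ ≤ h * B := by
    rw [hwdef, norm_smul, Real.norm_eq_abs, abs_of_pos hh]
    exact mul_le_mul_of_nonneg_left (hB (y t) (hmem t htmem)) hh.le
  have hytw : y t + w ∈ closedBall (0 : Fin 5 → ℝ) (R + 4) := by
    rw [mem_closedBall_zero_iff]
    calc ‖y t + w‖ ≤ ‖y t‖ + ‖w‖ := norm_add_le _ _
      _ ≤ R + h * B := add_le_add (hyR t (hsub htmem)) hwnorm
      _ ≤ R + 4 := by linarith
  have hE : ‖F (y t + w) - F (y t) - fderiv ℝ F (y t) w‖ ≤ L₂ * (h * B) ^ 2 := by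
    refine (aux_quad_bound F hF (R + 4) L₂ hL₂0 hL₂ (y t) w (hmem t htmem) hytw).trans ?_
    apply mul_le_mul_of_nonneg_left _ hL₂0
    have := hwnorm
    have h0 : (0:ℝ) ≤ ‖w‖ := norm_nonneg _
    nlinarith
  set E : Fin 5 → ℝ := F (y t + w) - F (y t) - fderiv ℝ F (y t) w with hEdef
  have hfw : fderiv ℝ F (y t) w = h • G (y t) := by
    rw [hwdef, (fderiv ℝ F (y t)).map_smul]
  have hid : y (t + h) - heunStep F h (y t) = ψ (t + h) - (h / 2) • E := by
    have hψval : ψ (t + h) =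
        y (t + h) - y t - h • F (y t) - (h ^ 2 / 2) • G (y t) := by
      rw [hψdef]
      have ht' : t + h - t = h := by ring
      simp only [ht']
    have hEval : E = F (y t + w) - F (y t) - h • G (y t) := by rw [hEdef, hfw]
    rw [hψval, hEval, heunStep, hwdef]
    module
  rw [hid]
  calc ‖ψ (t + h) - (h / 2) • E‖ ≤ ‖ψ (t + h)‖ + ‖(h / 2) • E‖ := norm_sub_le _ _
    _ ≤ LG * B * h * h * h + (h / 2) * (L₂ * (h * B) ^ 2) := by
        refine add_le_add hψ ?_
        rw [norm_smul, Real.norm_eq_abs, abs_of_pos (by linarith : (0:ℝ) < h / 2)]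
        exact mul_le_mul_of_nonneg_left hE (by linarith)
    _ ≤ (LG * B + L₂ * B * B) * h ^ 3 := by
        have h3 : (0:ℝ) ≤ L₂ * B * B * h ^ 3 := by positivity
        nlinarith [h3]

lemma aux_cube_ineq (x c : ℝ) (hx : 0 ≤ x) (h13 : x ≤ 1/3) (hc : 0 ≤ c) :
    (1 + 2*x) * ((1 + 2*x) * (1 + 2*x)) ≤ 1 + (12*x + c) := by
  nlinarith [mul_nonneg hx hx, mul_le_mul_of_nonneg_right h13 hx,
    mul_le_mul_of_nonneg_right (mul_le_mul_of_nonneg_right h13 hx) hx,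
    mul_nonneg (mul_nonneg hx hx) hx]

lemma aux_sum_lip (Lip : ℝ) (h1 : 1 ≤ Lip) (h53 : Lip ≤ 5/3) : 1 + Lip + Lip ^ 2 ≤ 6 := by
  nlinarith

/-- error estimate (46) of Theorem 1: for the three-step
explicit scheme `Y⁰ = y(t₀)`, `Y^{n+1} = H_{k/3}³(Y^n)` with `k = (T−t₀)/M`,
there are constants `C̃₁, C̃₂ > 0` independent of `k` such that the discrete
`L²` error satisfies `(k Σ_{n=1}^M ‖y(t_n) − Y^n‖_∞²)^{1/2} ≤
C̃₂ (e^{(T−t₀)C̃₁} − 1) k²`; the scheme is second-order convergent. -/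
theorem three_step_scheme_error_estimate
    (θ γ ρ μ α₁ α₂ r₁ r₂ τ b₁ b₂ σ N : ℝ) (hγ : 0 < γ) (hN : 0 < N)
    (t₀ T : ℝ) (htT : t₀ < T) (y : ℝ → Fin 5 → ℝ)
    (hy : ∀ t ∈ Set.Icc t₀ T,
      HasDerivAt y (corruptionField θ γ ρ μ α₁ α₂ r₁ r₂ τ b₁ b₂ σ N (y t)) t) :
    ∃ C₁ > (0 : ℝ), ∃ C₂ > (0 : ℝ), ∀ M : ℕ, 0 < M →
      ∀ Y : ℕ → Fin 5 → ℝ, Y 0 = y t₀ →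
        (∀ n < M, Y (n + 1) =
          heunStep (corruptionField θ γ ρ μ α₁ α₂ r₁ r₂ τ b₁ b₂ σ N) ((T - t₀) / M / 3)
            (heunStep (corruptionField θ γ ρ μ α₁ α₂ r₁ r₂ τ b₁ b₂ σ N) ((T - t₀) / M / 3)
              (heunStep (corruptionField θ γ ρ μ α₁ α₂ r₁ r₂ τ b₁ b₂ σ N) ((T - t₀) / M / 3)
                (Y n)))) →
        Real.sqrt ((T - t₀) / M *
            ∑ n ∈ Finset.Icc 1 M, ‖y (t₀ + n * ((T - t₀) / M)) - Y n‖ ^ 2) ≤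
          C₂ * (Real.exp ((T - t₀) * C₁) - 1) * ((T - t₀) / M) ^ 2 := by
  classical
  set F := corruptionField θ γ ρ μ α₁ α₂ r₁ r₂ τ b₁ b₂ σ N with hFdef
  have hF : ContDiff ℝ (⊤ : ℕ∞) F := corruptionField_contDiff θ γ ρ μ α₁ α₂ r₁ r₂ τ b₁ b₂ σ N
  have hTt : (0:ℝ) < T - t₀ := sub_pos.2 htT
  have hycont : ContinuousOn y (Icc t₀ T) :=
    fun t ht => (hy t ht).continuousAt.continuousWithinAt
  obtain ⟨R₀, hR₀⟩ := isCompact_Icc.exists_bound_of_continuousOn hycont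
  set R := max R₀ 0 with hRdef
  have hR0 : 0 ≤ R := le_max_right _ _
  have hyR : ∀ t ∈ Icc t₀ T, ‖y t‖ ≤ R := fun t ht => (hR₀ t ht).trans (le_max_left _ _)
  obtain ⟨B, hB0, hB⟩ := aux_bound_on_ball F hF.continuous (R + 4)
  obtain ⟨L, hL0, hL⟩ := aux_lip_on_ball F hF (R + 4)
  obtain ⟨L₂, hL₂0, hL₂⟩ := aux_lip_on_ball (fderiv ℝ F) (hF.fderiv_right (mod_cast le_top)) (R + 4)
  obtain ⟨LG, hLG0, hLG⟩ := aux_lip_on_ball (fun z => fderiv ℝ F z (F z))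
    ((hF.fderiv_right (mod_cast le_top)).clm_apply hF) (R + 4)
  set c₀' : ℝ := LG * B + L₂ * B * B with hc₀'def
  have hc₀'0 : 0 ≤ c₀' := by
    have h1 : 0 ≤ LG * B := mul_nonneg hLG0 hB0
    have h2 : 0 ≤ L₂ * B * B := mul_nonneg (mul_nonneg hL₂0 hB0) hB0
    rw [hc₀'def]; linarith
  set c₀ : ℝ := c₀' + 1 with hc₀def
  have hc₀pos : 0 < c₀ := by rw [hc₀def]; linarith
  set Λ : ℝ := 4 * L + 1 with hΛdef
  have hΛpos : 0 < Λ := by rw [hΛdef]; linarith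
  set C'' : ℝ := c₀ / Λ with hC''def
  have hC''pos : 0 < C'' := div_pos hc₀pos hΛpos
  have hCΛ : C'' * Λ = c₀ := div_mul_cancel₀ _ (ne_of_gt hΛpos)
  have hexp1 : 1 < Real.exp ((T - t₀) * Λ) :=
    Real.one_lt_exp_iff.2 (mul_pos hTt hΛpos)
  set C' : ℝ := C'' * (Real.exp ((T - t₀) * Λ) - 1) with hC'def
  have hC'pos : 0 < C' := mul_pos hC''pos (by linarith)
  set k₀ : ℝ := min (1 / (B + 1)) (min (1 / (L + 1)) (1 / (C' + 1))) with hk₀def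
  have hk₀pos : 0 < k₀ := by
    apply lt_min (div_pos one_pos (by linarith))
    exact lt_min (div_pos one_pos (by linarith)) (div_pos one_pos (by linarith))
  have hk₀B : k₀ ≤ 1 / (B + 1) := min_le_left _ _
  have hk₀L : k₀ ≤ 1 / (L + 1) := (min_le_right _ _).trans (min_le_left _ _)
  have hk₀C : k₀ ≤ 1 / (C' + 1) := (min_le_right _ _).trans (min_le_right _ _)
  set Ψ : ℕ → (Fin 5 → ℝ) → Fin 5 → ℝ := fun M z =>
    heunStep F ((T - t₀) / M / 3) (heunStep F ((T - t₀) / M / 3)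
      (heunStep F ((T - t₀) / M / 3) z)) with hΨdef
  set Φ : ℕ → ℕ → Fin 5 → ℝ := fun M n => (Ψ M)^[n] (y t₀) with hΦdef
  set fM : ℕ → ℝ := fun M => Real.sqrt ((T - t₀) / M *
    ∑ n ∈ Finset.Icc 1 M, ‖y (t₀ + n * ((T - t₀) / M)) - Φ M n‖ ^ 2) with hfMdef
  set M₀ : ℕ := ⌈(T - t₀) / k₀⌉₊ + 1 with hM₀def
  set D : ℕ := (Finset.Ico 1 M₀).sup (fun M =>
    ⌈fM M / ((Real.exp ((T - t₀) * Λ) - 1) * ((T - t₀) / M) ^ 2)⌉₊) with hDdef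
  clear_value F c₀' c₀ Λ C'' C' k₀ Ψ Φ fM M₀ D
  have hC₂pos : (0:ℝ) < Real.sqrt (T - t₀) * C'' + D + 1 := by
    have h1 : 0 ≤ Real.sqrt (T - t₀) * C'' := mul_nonneg (Real.sqrt_nonneg _) hC''pos.le
    have h2 : (0:ℝ) ≤ (D:ℝ) := Nat.cast_nonneg _
    linarith
  refine ⟨Λ, hΛpos, Real.sqrt (T - t₀) * C'' + D + 1, hC₂pos, ?_⟩
  intro M hM Y hY0 hYrec
  have hMR : (0:ℝ) < M := Nat.cast_pos.2 hM
  set k : ℝ := (T - t₀) / M with hkdef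
  have hkpos : 0 < k := div_pos hTt hMR
  have hMk : (M:ℝ) * k = T - t₀ := by
    rw [hkdef]; field_simp
  have hYΦ : ∀ n, n ≤ M → Y n = Φ M n := by
    intro n
    induction n with
    | zero => intro _; rw [hY0, hΦdef]; simp
    | succ n ih =>
      intro hn
      have hn' : n < M := Nat.lt_of_succ_le hn
      rw [hYrec n hn', ih hn'.le]
      have : Φ M (n + 1) = Ψ M (Φ M n) := by
        rw [hΦdef]; simp [Function.iterate_succ_apply']
      rw [this, hΨdef, hkdef]
  by_cases hsmall : M < M₀
  · -- finitely many coarse meshes, handled by the constant D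
    have hsum : ∑ n ∈ Finset.Icc 1 M, ‖y (t₀ + n * k) - Y n‖ ^ 2
        = ∑ n ∈ Finset.Icc 1 M, ‖y (t₀ + n * k) - Φ M n‖ ^ 2 :=
      Finset.sum_congr rfl fun n hn => by rw [hYΦ n (Finset.mem_Icc.1 hn).2]
    rw [hsum]
    have hfMeq : fM M = Real.sqrt (k * ∑ n ∈ Finset.Icc 1 M,
        ‖y (t₀ + n * k) - Φ M n‖ ^ 2) := by
      rw [hfMdef, hkdef]
    rw [← hfMeq]
    set denom : ℝ := (Real.exp ((T - t₀) * Λ) - 1) * k ^ 2 with hdenomdef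
    have hdenpos : 0 < denom := by
      rw [hdenomdef]
      exact mul_pos (by linarith) (by positivity)
    have h1 : fM M ≤ (⌈fM M / denom⌉₊ : ℝ) * denom := by
      have h2 := Nat.le_ceil (fM M / denom)
      calc fM M = fM M / denom * denom := by field_simp
        _ ≤ (⌈fM M / denom⌉₊ : ℝ) * denom := mul_le_mul_of_nonneg_right h2 hdenpos.le
    have h2 : ⌈fM M / denom⌉₊ ≤ D := by
      have hmem : M ∈ Finset.Ico 1 M₀ := Finset.mem_Ico.2 ⟨hM, hsmall⟩
      have h3 : ⌈fM M / ((Real.exp ((T - t₀) * Λ) - 1) * ((T - t₀) / (M:ℝ)) ^ 2)⌉₊ ≤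
          (Finset.Ico 1 M₀).sup (fun M =>
            ⌈fM M / ((Real.exp ((T - t₀) * Λ) - 1) * ((T - t₀) / M) ^ 2)⌉₊) :=
        Finset.le_sup (f := fun M =>
          ⌈fM M / ((Real.exp ((T - t₀) * Λ) - 1) * ((T - t₀) / M) ^ 2)⌉₊) hmem
      rw [hdenomdef, hkdef, hDdef]
      exact h3
    calc fM M ≤ (⌈fM M / denom⌉₊ : ℝ) * denom := h1
      _ ≤ (D : ℝ) * denom := by
          exact mul_le_mul_of_nonneg_right (Nat.cast_le.2 h2) hdenpos.le
      _ ≤ (Real.sqrt (T - t₀) * C'' + D + 1) * denom := by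
          apply mul_le_mul_of_nonneg_right _ hdenpos.le
          have : 0 ≤ Real.sqrt (T - t₀) * C'' := mul_nonneg (Real.sqrt_nonneg _) hC''pos.le
          linarith
      _ = (Real.sqrt (T - t₀) * C'' + ↑D + 1) * (Real.exp ((T - t₀) * Λ) - 1) * k ^ 2 := by
          rw [hdenomdef]; ring
  · -- fine meshes: genuine convergence analysis
    push_neg at hsmall
    clear_value k
    have hkk₀ : k ≤ k₀ := by
      have h1 : (T - t₀) / k₀ ≤ (M₀ : ℝ) := by
        rw [hM₀def]; push_cast
        linarith [Nat.le_ceil ((T - t₀) / k₀)]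
      rw [div_le_iff₀ hk₀pos] at h1
      have h2 : (M₀:ℝ) ≤ M := Nat.cast_le.2 hsmall
      have h3 : (M₀:ℝ) * k₀ ≤ (M:ℝ) * k₀ := mul_le_mul_of_nonneg_right h2 hk₀pos.le
      rw [hkdef, div_le_iff₀ hMR]
      calc T - t₀ ≤ (M₀:ℝ) * k₀ := h1
        _ ≤ (M:ℝ) * k₀ := h3
        _ = k₀ * M := by ring
    have hkB1 : k * (B + 1) ≤ 1 := by
      have h := hkk₀.trans hk₀B
      rwa [le_div_iff₀ (by linarith : (0:ℝ) < B + 1)] at h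
    have hkL1 : k * (L + 1) ≤ 1 := by
      have h := hkk₀.trans hk₀L
      rwa [le_div_iff₀ (by linarith : (0:ℝ) < L + 1)] at h
    have hkC1 : k * (C' + 1) ≤ 1 := by
      have h := hkk₀.trans hk₀C
      rwa [le_div_iff₀ (by linarith : (0:ℝ) < C' + 1)] at h
    have ekB : k * (B + 1) = k * B + k := by ring
    have ekL : k * (L + 1) = k * L + k := by ring
    have hkBnn : 0 ≤ k * B := mul_nonneg hkpos.le hB0
    have hkLnn : 0 ≤ k * L := mul_nonneg hkpos.le hL0
    have hk1 : k ≤ 1 := by linarith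
    have hkB : k * B ≤ 1 := by linarith
    have hkL : k * L ≤ 1 := by linarith
    set h : ℝ := k / 3 with hhdef
    clear_value h
    have h3k : 3 * h = k := by rw [hhdef]; ring
    have hhpos : 0 < h := by rw [hhdef]; linarith
    have ehB : h * B = k * B / 3 := by rw [hhdef]; ring
    have ehL : h * L = k * L / 3 := by rw [hhdef]; ring
    have hhB : h * B ≤ 1/3 := by linarith
    have hhB1 : h * B ≤ 1 := by linarith
    have hhL : h * L ≤ 1/3 := by linarith
    have hhL1 : h * L ≤ 1 := by linarith
    -- basic facts about the Heun step with this h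
    have hHmove : ∀ z : Fin 5 → ℝ, ‖z‖ ≤ R + 3 → ‖heunStep F h z - z‖ ≤ h * B :=
      fun z hz => heun_move F R B h hB hhpos.le hhB1 z hz
    have hHnorm : ∀ z : Fin 5 → ℝ, ‖z‖ ≤ R + 2 → ‖heunStep F h z‖ ≤ ‖z‖ + 1/3 := by
      intro z hz
      have h1 := hHmove z (by linarith)
      have h2 : heunStep F h z = (heunStep F h z - z) + z := by abel
      calc ‖heunStep F h z‖ = ‖(heunStep F h z - z) + z‖ := by rw [← h2]
        _ ≤ ‖heunStep F h z - z‖ + ‖z‖ := norm_add_le _ _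
        _ ≤ ‖z‖ + 1/3 := by linarith
    set Lip : ℝ := 1 + 2 * h * L with hLipdef
    clear_value Lip
    have hLip1 : 1 ≤ Lip := by
      have := mul_nonneg hhpos.le hL0
      rw [hLipdef]; linarith
    have hLip53 : Lip ≤ 5/3 := by rw [hLipdef]; linarith
    have hlip : ∀ z z' : Fin 5 → ℝ, ‖z‖ ≤ R + 3 → ‖z'‖ ≤ R + 3 →
        ‖heunStep F h z - heunStep F h z'‖ ≤ Lip * ‖z - z'‖ := by
      intro z z' hz hz'
      rw [hLipdef]
      exact heun_lip F R B L h hL0 hB hL hhpos.le hhB1 hhL1 z z' hz hz'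
    have hcons : ∀ t : ℝ, t₀ ≤ t → t + h ≤ T →
        ‖y (t + h) - heunStep F h (y t)‖ ≤ c₀' * h ^ 3 := by
      intro t ht hth
      have := heun_consistency F hF y t₀ T hy R B L₂ LG hB0 hL₂0 hLG0 hyR hB hL₂ hLG
        t h hhpos hhB1 ht hth
      rw [hc₀'def]
      exact this
    have hexpTT : ∀ n : ℕ, n ≤ M → Real.exp (Λ * (n * k)) ≤ Real.exp ((T - t₀) * Λ) := by
      intro n hn
      apply Real.exp_le_exp.2
      have h1 : (n:ℝ) ≤ M := Nat.cast_le.2 hn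
      have h2 : (n:ℝ) * k ≤ T - t₀ := by
        rw [← hMk]
        exact mul_le_mul_of_nonneg_right h1 hkpos.le
      calc Λ * ((n:ℝ) * k) ≤ Λ * (T - t₀) := mul_le_mul_of_nonneg_left h2 hΛpos.le
        _ = (T - t₀) * Λ := by ring
    have hC'k1 : C' * k ^ 2 ≤ 1 := by
      have e1 : k * (C' + 1) = k * C' + k := by ring
      have h1 : k * C' ≤ 1 - k := by linarith
      have e2 : C' * k ^ 2 = (k * C') * k := by ring
      rw [e2]
      calc (k * C') * k ≤ 1 * k := mul_le_mul_of_nonneg_right (by linarith) hkpos.le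
        _ = k := one_mul k
        _ ≤ 1 := hk1
    -- the main induction
    have key : ∀ n, n ≤ M →
        ‖y (t₀ + n * k) - Y n‖ ≤ C'' * (Real.exp (Λ * (n * k)) - 1) * k ^ 2 := by
      intro n
      induction n with
      | zero =>
        intro _
        simp [hY0]
      | succ n ih =>
        intro hn1
        have hnM : n ≤ M := Nat.le_of_succ_le hn1
        have ihn := ih hnM
        set tn : ℝ := t₀ + n * k with htndef
        clear_value tn
        have hnk : (n:ℝ) * k ≤ T - t₀ := by
          have h1 : (n:ℝ) ≤ M := Nat.cast_le.2 hnM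
          rw [← hMk]
          exact mul_le_mul_of_nonneg_right h1 hkpos.le
        have hn1k : ((n:ℝ) + 1) * k ≤ T - t₀ := by
          have h1 : (n:ℝ) + 1 ≤ M := by
            have h2 : ((n+1 : ℕ) : ℝ) ≤ (M:ℝ) := Nat.cast_le.2 hn1
            push_cast at h2
            linarith
          rw [← hMk]
          exact mul_le_mul_of_nonneg_right h1 hkpos.le
        have hnk0 : 0 ≤ (n:ℝ) * k := mul_nonneg (Nat.cast_nonneg n) hkpos.le
        have htn0 : t₀ ≤ tn := by rw [htndef]; linarith
        have htnk : tn + k ≤ T := by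
          rw [htndef]
          have e : t₀ + (n:ℝ) * k + k = t₀ + ((n:ℝ) + 1) * k := by ring
          rw [e]; linarith
        have htnT : tn ≤ T := by linarith
        -- a priori bound on the error at step n
        have hen' : ‖y tn - Y n‖ ≤ C' * k ^ 2 := by
          refine ihn.trans ?_
          rw [hC'def]
          have h1 : Real.exp (Λ * (n * k)) - 1 ≤ Real.exp ((T - t₀) * Λ) - 1 := by
            linarith [hexpTT n hnM]
          have h2 : 0 ≤ Real.exp (Λ * (n * k)) - 1 := by
            have := Real.add_one_le_exp (Λ * ((n:ℝ) * k))
            have h3 : 0 ≤ Λ * ((n:ℝ) * k) := mul_nonneg hΛpos.le hnk0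
            linarith
          apply mul_le_mul_of_nonneg_right _ (sq_nonneg k)
          exact mul_le_mul_of_nonneg_left h1 hC''pos.le
        have hen1 : ‖y tn - Y n‖ ≤ 1 := hen'.trans hC'k1
        have hYn : ‖Y n‖ ≤ R + 1 := by
          have h2 := norm_sub_le (y tn) (y tn - Y n)
          rw [sub_sub_cancel] at h2
          have h3 : ‖y tn‖ ≤ R := hyR tn ⟨htn0, htnT⟩
          linarith
        -- norms of all intermediate points
        have ny0 : ‖y tn‖ ≤ R := hyR tn ⟨htn0, htnT⟩
        have ny1 : ‖y (tn + h)‖ ≤ R := hyR _ ⟨by linarith, by linarith⟩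
        have ny2 : ‖y (tn + h + h)‖ ≤ R := hyR _ ⟨by linarith, by linarith⟩
        have nH0 : ‖heunStep F h (y tn)‖ ≤ R + 1/3 := by
          have := hHnorm (y tn) (by linarith); linarith
        have nHH0 : ‖heunStep F h (heunStep F h (y tn))‖ ≤ R + 2/3 := by
          have := hHnorm (heunStep F h (y tn)) (by linarith); linarith
        have nHY : ‖heunStep F h (Y n)‖ ≤ R + 4/3 := by
          have := hHnorm (Y n) (by linarith); linarith
        have nHHY : ‖heunStep F h (heunStep F h (Y n))‖ ≤ R + 5/3 := by
          have := hHnorm (heunStep F h (Y n)) (by linarith); linarith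
        -- local truncation errors
        have τ0 : ‖y (tn + h) - heunStep F h (y tn)‖ ≤ c₀' * h ^ 3 :=
          hcons tn htn0 (by linarith)
        have τ1 : ‖y (tn + h + h) - heunStep F h (y (tn + h))‖ ≤ c₀' * h ^ 3 :=
          hcons (tn + h) (by linarith) (by linarith)
        have τ2 : ‖y (tn + h + h + h) - heunStep F h (y (tn + h + h))‖ ≤ c₀' * h ^ 3 :=
          hcons (tn + h + h) (by linarith) (by linarith)
        -- composite consistency
        have chain1 : ‖y (tn + h + h) - heunStep F h (heunStep F h (y tn))‖
            ≤ c₀' * h ^ 3 + Lip * (c₀' * h ^ 3) := by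
          have hid : y (tn + h + h) - heunStep F h (heunStep F h (y tn)) =
              (y (tn + h + h) - heunStep F h (y (tn + h))) +
              (heunStep F h (y (tn + h)) - heunStep F h (heunStep F h (y tn))) := by abel
          calc ‖y (tn + h + h) - heunStep F h (heunStep F h (y tn))‖
              ≤ ‖y (tn + h + h) - heunStep F h (y (tn + h))‖ +
                ‖heunStep F h (y (tn + h)) - heunStep F h (heunStep F h (y tn))‖ := by
                rw [hid]; exact norm_add_le _ _
            _ ≤ c₀' * h ^ 3 + Lip * ‖y (tn + h) - heunStep F h (y tn)‖ :=
                add_le_add τ1 (hlip _ _ (by linarith) (by linarith))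
            _ ≤ c₀' * h ^ 3 + Lip * (c₀' * h ^ 3) :=
                add_le_add le_rfl (mul_le_mul_of_nonneg_left τ0 (by linarith))
        have chain2 : ‖y (tn + k) - heunStep F h (heunStep F h (heunStep F h (y tn)))‖
            ≤ c₀ * k ^ 3 := by
          have e1 : tn + h + h + h = tn + k := by linarith
          have hid : y (tn + h + h + h) -
              heunStep F h (heunStep F h (heunStep F h (y tn))) =
              (y (tn + h + h + h) - heunStep F h (y (tn + h + h))) +
              (heunStep F h (y (tn + h + h)) -
                heunStep F h (heunStep F h (heunStep F h (y tn)))) := by abel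
          have hstep : ‖y (tn + h + h + h) -
              heunStep F h (heunStep F h (heunStep F h (y tn)))‖
              ≤ c₀' * h ^ 3 + Lip * (c₀' * h ^ 3 + Lip * (c₀' * h ^ 3)) := by
            calc ‖y (tn + h + h + h) - heunStep F h (heunStep F h (heunStep F h (y tn)))‖
                ≤ ‖y (tn + h + h + h) - heunStep F h (y (tn + h + h))‖ +
                  ‖heunStep F h (y (tn + h + h)) -
                    heunStep F h (heunStep F h (heunStep F h (y tn)))‖ := by
                  rw [hid]; exact norm_add_le _ _
              _ ≤ c₀' * h ^ 3 + Lip * ‖y (tn + h + h) -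
                    heunStep F h (heunStep F h (y tn))‖ :=
                  add_le_add τ2 (hlip _ _ (by linarith) (by linarith))
              _ ≤ c₀' * h ^ 3 + Lip * (c₀' * h ^ 3 + Lip * (c₀' * h ^ 3)) :=
                  add_le_add le_rfl (mul_le_mul_of_nonneg_left chain1 (by linarith))
          rw [e1] at hstep
          refine hstep.trans ?_
          have hsum6 : 1 + Lip + Lip ^ 2 ≤ 6 := aux_sum_lip Lip hLip1 hLip53
          have hh3 : h ^ 3 = k ^ 3 / 27 := by rw [hhdef]; ring
          have hk3 : (0:ℝ) ≤ k ^ 3 := by positivity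
          have e2 : c₀' * h ^ 3 + Lip * (c₀' * h ^ 3 + Lip * (c₀' * h ^ 3)) =
              c₀' * h ^ 3 * (1 + Lip + Lip ^ 2) := by ring
          rw [e2, hh3]
          have e3 : c₀' * (k ^ 3 / 27) * (1 + Lip + Lip ^ 2) ≤ c₀' * (k ^ 3 / 27) * 6 := by
            apply mul_le_mul_of_nonneg_left hsum6
            positivity
          refine e3.trans ?_
          rw [hc₀def]
          have e4 : c₀' * (k ^ 3 / 27) * 6 = (2/9) * (c₀' * k ^ 3) := by ring
          have e5 : (c₀' + 1) * k ^ 3 = c₀' * k ^ 3 + k ^ 3 := by ring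
          have hp : 0 ≤ c₀' * k ^ 3 := mul_nonneg hc₀'0 hk3
          rw [e4, e5]
          linarith
        -- stability
        have stab : ‖heunStep F h (heunStep F h (heunStep F h (y tn))) -
            heunStep F h (heunStep F h (heunStep F h (Y n)))‖
            ≤ Lip * (Lip * (Lip * ‖y tn - Y n‖)) := by
          have s1 : ‖heunStep F h (y tn) - heunStep F h (Y n)‖ ≤ Lip * ‖y tn - Y n‖ :=
            hlip _ _ (by linarith) (by linarith)
          have s2 : ‖heunStep F h (heunStep F h (y tn)) -
              heunStep F h (heunStep F h (Y n))‖ ≤ Lip * (Lip * ‖y tn - Y n‖) :=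
            (hlip _ _ (by linarith) (by linarith)).trans
              (mul_le_mul_of_nonneg_left s1 (by linarith))
          exact (hlip _ _ (by linarith) (by linarith)).trans
            (mul_le_mul_of_nonneg_left s2 (by linarith))
        have hLip3 : Lip * (Lip * Lip) ≤ 1 + Λ * k := by
          have hx0 : 0 ≤ h * L := mul_nonneg hhpos.le hL0
          have e1 : Λ * k = 4 * L * k + k := by rw [hΛdef]; ring
          have e2 : 4 * L * k = 12 * (h * L) := by rw [hhdef]; ring
          rw [hLipdef, e1, e2]
          have e3 : 1 + 2 * h * L = 1 + 2 * (h * L) := by ring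
          rw [e3]
          exact aux_cube_ineq (h * L) k hx0 hhL hkpos.le
        -- the recurrence
        have hYsucc : Y (n + 1) =
            heunStep F h (heunStep F h (heunStep F h (Y n))) :=
          hYrec n (Nat.lt_of_succ_le hn1)
        have hcast : t₀ + ((n:ℝ) + 1) * k = tn + k := by rw [htndef]; ring
        have hrec : ‖y (t₀ + ((n:ℝ) + 1) * k) - Y (n + 1)‖
            ≤ c₀ * k ^ 3 + (1 + Λ * k) * ‖y tn - Y n‖ := by
          rw [hcast, hYsucc]
          have hid : y (tn + k) - heunStep F h (heunStep F h (heunStep F h (Y n))) =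
              (y (tn + k) - heunStep F h (heunStep F h (heunStep F h (y tn)))) +
              (heunStep F h (heunStep F h (heunStep F h (y tn))) -
                heunStep F h (heunStep F h (heunStep F h (Y n)))) := by abel
          calc ‖y (tn + k) - heunStep F h (heunStep F h (heunStep F h (Y n)))‖
              ≤ ‖y (tn + k) - heunStep F h (heunStep F h (heunStep F h (y tn)))‖ +
                ‖heunStep F h (heunStep F h (heunStep F h (y tn))) -
                  heunStep F h (heunStep F h (heunStep F h (Y n)))‖ := by
                rw [hid]; exact norm_add_le _ _
            _ ≤ c₀ * k ^ 3 + Lip * (Lip * (Lip * ‖y tn - Y n‖)) := add_le_add chain2 stab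
            _ ≤ c₀ * k ^ 3 + (1 + Λ * k) * ‖y tn - Y n‖ := by
                refine add_le_add le_rfl ?_
                have e1 : Lip * (Lip * (Lip * ‖y tn - Y n‖)) =
                    (Lip * (Lip * Lip)) * ‖y tn - Y n‖ := by ring
                rw [e1]
                exact mul_le_mul_of_nonneg_right hLip3 (norm_nonneg _)
        -- Gronwall-type algebra
        have hfinal : c₀ * k ^ 3 + (1 + Λ * k) *
            (C'' * (Real.exp (Λ * (n * k)) - 1) * k ^ 2)
            ≤ C'' * (Real.exp (Λ * (((n:ℝ) + 1) * k)) - 1) * k ^ 2 := by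
          have hsplit : Real.exp (Λ * (((n:ℝ) + 1) * k)) =
              Real.exp (Λ * k) * Real.exp (Λ * ((n:ℝ) * k)) := by
            rw [← Real.exp_add]; ring_nf
          rw [hsplit]
          have e1 : c₀ * k ^ 3 + (1 + Λ * k) *
              (C'' * (Real.exp (Λ * ((n:ℝ) * k)) - 1) * k ^ 2) =
              C'' * ((1 + Λ * k) * Real.exp (Λ * ((n:ℝ) * k)) - 1) * k ^ 2 := by
            rw [← hCΛ]; ring
          rw [e1]
          apply mul_le_mul_of_nonneg_right _ (sq_nonneg k)
          apply mul_le_mul_of_nonneg_left _ hC''pos.le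
          have hQ : 1 + Λ * k ≤ Real.exp (Λ * k) := by
            have := Real.add_one_le_exp (Λ * k); linarith
          have hP : 0 < Real.exp (Λ * ((n:ℝ) * k)) := Real.exp_pos _
          have := mul_le_mul_of_nonneg_right hQ hP.le
          linarith
        have hnc : ((n + 1 : ℕ) : ℝ) = (n:ℝ) + 1 := by push_cast; ring
        rw [hnc]
        calc ‖y (t₀ + ((n:ℝ) + 1) * k) - Y (n + 1)‖
            ≤ c₀ * k ^ 3 + (1 + Λ * k) * ‖y tn - Y n‖ := hrec
          _ ≤ c₀ * k ^ 3 + (1 + Λ * k) *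
              (C'' * (Real.exp (Λ * (n * k)) - 1) * k ^ 2) := by
              refine add_le_add le_rfl ?_
              apply mul_le_mul_of_nonneg_left ihn
              have : 0 ≤ Λ * k := mul_nonneg hΛpos.le hkpos.le
              linarith
          _ ≤ C'' * (Real.exp (Λ * (((n:ℝ) + 1) * k)) - 1) * k ^ 2 := hfinal
    -- conclude: discrete L² bound
    have hterm : ∀ n ∈ Finset.Icc 1 M,
        ‖y (t₀ + n * k) - Y n‖ ^ 2 ≤ (C' * k ^ 2) ^ 2 := by
      intro n hn
      have hnM : n ≤ M := (Finset.mem_Icc.1 hn).2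
      have h1 := key n hnM
      have h2 : ‖y (t₀ + n * k) - Y n‖ ≤ C' * k ^ 2 := by
        refine h1.trans ?_
        rw [hC'def]
        have h3 : Real.exp (Λ * (n * k)) - 1 ≤ Real.exp ((T - t₀) * Λ) - 1 := by
          linarith [hexpTT n hnM]
        apply mul_le_mul_of_nonneg_right _ (sq_nonneg k)
        exact mul_le_mul_of_nonneg_left h3 hC''pos.le
      exact pow_le_pow_left₀ (norm_nonneg _) h2 2
    have hsum : ∑ n ∈ Finset.Icc 1 M, ‖y (t₀ + n * k) - Y n‖ ^ 2
        ≤ (M : ℝ) * (C' * k ^ 2) ^ 2 := by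
      have := Finset.sum_le_card_nsmul _ _ _ hterm
      rwa [Nat.card_Icc, Nat.add_sub_cancel, nsmul_eq_mul] at this
    have harg : k * ∑ n ∈ Finset.Icc 1 M, ‖y (t₀ + n * k) - Y n‖ ^ 2
        ≤ (T - t₀) * (C' * k ^ 2) ^ 2 := by
      calc k * ∑ n ∈ Finset.Icc 1 M, ‖y (t₀ + n * k) - Y n‖ ^ 2
          ≤ k * ((M : ℝ) * (C' * k ^ 2) ^ 2) := mul_le_mul_of_nonneg_left hsum hkpos.le
        _ = ((M:ℝ) * k) * (C' * k ^ 2) ^ 2 := by ring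
        _ = (T - t₀) * (C' * k ^ 2) ^ 2 := by rw [hMk]
    calc Real.sqrt (k * ∑ n ∈ Finset.Icc 1 M, ‖y (t₀ + n * k) - Y n‖ ^ 2)
        ≤ Real.sqrt ((T - t₀) * (C' * k ^ 2) ^ 2) := Real.sqrt_le_sqrt harg
      _ = Real.sqrt (T - t₀) * (C' * k ^ 2) := by
          rw [Real.sqrt_mul hTt.le, Real.sqrt_sq (by positivity)]
      _ = Real.sqrt (T - t₀) * C'' * (Real.exp ((T - t₀) * Λ) - 1) * k ^ 2 := by
          rw [hC'def]; ring
      _ ≤ (Real.sqrt (T - t₀) * C'' + ↑D + 1) * (Real.exp ((T - t₀) * Λ) - 1) * k ^ 2 := by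
          apply mul_le_mul_of_nonneg_right _ (sq_nonneg k)
          apply mul_le_mul_of_nonneg_right _ (by linarith : (0:ℝ) ≤ Real.exp ((T - t₀) * Λ) - 1)
          have h1 : (0:ℝ) ≤ (D:ℝ) := Nat.cast_nonneg _
          linarith
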